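/- arXiv:0810.4117 — 2 statements merged into one kernel-verified Lean document; each statement's English description precedes it below -/
import Mathlib

section
/- Let (X,d,W) be a uniformly convex W-hyperbolic space with modulus of uniform convexity η. Assume r > 0, ε ∈ (0,2] and a,x,y ∈ X satisfy d(x,a) ≤ r, d(y,a) ≤ r and d(x,y) ≥ εr. Then for every λ ∈ [0,1] and every s ≥ r, d((1−λ)x ⊕ λy, a) ≤ (1 − 2λ(1−λ)η(s, εr/s))·s. -/
open Set Filter Metric Bornology Function

/-- A `W`-hyperbolic space structure on a metric space `X` (Kohlenbach).
`W x y l` denotes `(1-l)x ⊕ l y`. -/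
structure WHyp (X : Type*) [MetricSpace X] where
  W : X → X → ℝ → X
  W1 : ∀ (x y z : X), ∀ l ∈ Set.Icc (0:ℝ) 1,
    dist z (W x y l) ≤ (1 - l) * dist z x + l * dist z y
  W2 : ∀ (x y : X), ∀ l ∈ Set.Icc (0:ℝ) 1, ∀ l' ∈ Set.Icc (0:ℝ) 1,
    dist (W x y l) (W x y l') = |l - l'| * dist x y
  W3 : ∀ (x y : X), ∀ l ∈ Set.Icc (0:ℝ) 1, W x y l = W y x (1 - l)
  W4 : ∀ (x y z w : X), ∀ l ∈ Set.Icc (0:ℝ) 1,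
    dist (W x z l) (W y w l) ≤ (1 - l) * dist x y + l * dist z w

/-- `η` is a modulus of uniform convexity for the `W`-hyperbolic space `H`. -/
def WHyp.UnifConvex {X : Type*} [MetricSpace X] (H : WHyp X) (η : ℝ → ℝ → ℝ) : Prop :=
  (∀ r ε : ℝ, 0 < r → ε ∈ Set.Ioc (0:ℝ) 2 → η r ε ∈ Set.Ioc (0:ℝ) 1) ∧
  (∀ (r ε : ℝ) (a x y : X), 0 < r → ε ∈ Set.Ioc (0:ℝ) 2 →
    dist x a ≤ r → dist y a ≤ r → ε * r ≤ dist x y →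
    dist (H.W x y (1/2)) a ≤ (1 - η r ε) * r)

/-!
Uniform convexity makes the points `W x y l` unique: two distinct points at distances
`≤ R₁` from `x` and `≤ R₂` from `y`, with `R₁ + R₂ ≤ d(x, y)`, would have a midpoint strictly
closer to both, contradicting the triangle inequality. Hence for `l ≤ 1/2` the point
`(1-l)x ⊕ l y` equals `(1-2l)x ⊕ 2l m` with `m` the midpoint of `x` and `y`, and (W1) together
with the uniform convexity bound at `m` gives `d((1-l)x ⊕ l y, a) ≤ (1 - 2lη) s`, which is
stronger than the claim; the case `l ≥ 1/2` follows by (W3).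
-/

namespace WHyp

variable {X : Type*} [MetricSpace X] (H : WHyp X)

theorem W_zero (x y : X) : H.W x y 0 = x := by
  have h := H.W1 x y x 0 (by norm_num)
  simp only [sub_zero, dist_self, mul_zero, zero_mul, add_zero, ] at h
  exact (dist_le_zero.mp h).symm

theorem W_one (x y : X) : H.W x y 1 = y := by
  rw [H.W3 x y 1 (by norm_num), sub_self, W_zero]

theorem dist_W_left (x y : X) {l : ℝ} (hl : l ∈ Set.Icc (0:ℝ) 1) :
    dist (H.W x y l) x = l * dist x y := by
  have h := H.W2 x y l hl 0 (by norm_num)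
  rwa [W_zero, sub_zero, abs_of_nonneg hl.1] at h

theorem dist_W_right (x y : X) {l : ℝ} (hl : l ∈ Set.Icc (0:ℝ) 1) :
    dist (H.W x y l) y = (1 - l) * dist x y := by
  have h := H.W2 x y l hl 1 (by norm_num)
  rwa [W_one, abs_of_nonpos (by linarith [hl.2]), neg_sub] at h

namespace UnifConvex

variable {H} {η : ℝ → ℝ → ℝ}

theorem dist_midpoint_lt (hU : H.UnifConvex η) {p u c : X} {R : ℝ}
    (hp : dist p c ≤ R) (hu : dist u c ≤ R) (hpu : p ≠ u) :
    dist (H.W p u (1/2)) c < R := by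
  have hδ : 0 < dist p u := dist_pos.mpr hpu
  have hδR : dist p u ≤ 2 * R := by linarith [dist_triangle_right p u c]
  have hR : 0 < R := by linarith
  have hε : dist p u / R ∈ Set.Ioc (0:ℝ) 2 :=
    ⟨div_pos hδ hR, (div_le_iff₀ hR).mpr hδR⟩
  have hη := (hU.1 R _ hR hε).1
  have hmid := hU.2 R _ c p u hR hε hp hu (div_mul_cancel₀ _ hR.ne').le
  nlinarith

theorem eq_of_dist_le (hU : H.UnifConvex η) {x y p u : X} {R₁ R₂ : ℝ}
    (hpx : dist p x ≤ R₁) (hux : dist u x ≤ R₁) (hpy : dist p y ≤ R₂) (huy : dist u y ≤ R₂)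
    (hxy : R₁ + R₂ ≤ dist x y) : p = u := by
  by_contra hpu
  have hx := hU.dist_midpoint_lt hpx hux hpu
  have hy := hU.dist_midpoint_lt hpy huy hpu
  linarith [dist_triangle_left x y (H.W p u (1/2))]

theorem W_eq_W_midpoint (hU : H.UnifConvex η) (x y : X) {l : ℝ}
    (hl : l ∈ Set.Icc (0:ℝ) (1/2)) :
    H.W x y l = H.W x (H.W x y (1/2)) (2 * l) := by
  have hl1 : l ∈ Set.Icc (0:ℝ) 1 := ⟨hl.1, by linarith [hl.2]⟩
  have h2l : 2 * l ∈ Set.Icc (0:ℝ) 1 := ⟨by linarith [hl.1], by linarith [hl.2]⟩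
  set m := H.W x y (1/2)
  have hmx : dist x m = 1/2 * dist x y := by
    rw [dist_comm]; exact H.dist_W_left x y (by norm_num)
  have hmy : dist m y = 1/2 * dist x y := by
    rw [H.dist_W_right x y (by norm_num)]; norm_num
  have hux : dist (H.W x m (2 * l)) x = l * dist x y := by
    rw [H.dist_W_left x m h2l, hmx]; ring
  have huy : dist (H.W x m (2 * l)) y ≤ (1 - l) * dist x y := by
    calc dist (H.W x m (2 * l)) y ≤ dist (H.W x m (2 * l)) m + dist m y := dist_triangle _ _ _
      _ = (1 - l) * dist x y := by rw [H.dist_W_right x m h2l, hmx, hmy]; ring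
  exact hU.eq_of_dist_le (H.dist_W_left x y hl1).le hux.le (H.dist_W_right x y hl1).le huy
    (by linarith)

theorem dist_W_le_of_le_half (hU : H.UnifConvex η) {x y a : X} {s η₀ l : ℝ}
    (hxa : dist x a ≤ s) (hma : dist (H.W x y (1/2)) a ≤ (1 - η₀) * s)
    (hl : l ∈ Set.Icc (0:ℝ) (1/2)) :
    dist (H.W x y l) a ≤ (1 - 2 * l * η₀) * s := by
  have h2l : 2 * l ∈ Set.Icc (0:ℝ) 1 := ⟨by linarith [hl.1], by linarith [hl.2]⟩
  rw [hU.W_eq_W_midpoint x y hl, dist_comm]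
  calc dist a (H.W x (H.W x y (1/2)) (2 * l))
      ≤ (1 - 2 * l) * dist a x + 2 * l * dist a (H.W x y (1/2)) := H.W1 _ _ a _ h2l
    _ ≤ (1 - 2 * l) * s + 2 * l * ((1 - η₀) * s) := by
        rw [dist_comm a x, dist_comm a]
        gcongr <;> linarith [hl.1, hl.2]
    _ = (1 - 2 * l * η₀) * s := by ring

theorem dist_W_le_of_dist_midpoint_le (hU : H.UnifConvex η) {x y a : X} {s η₀ : ℝ}
    (hη₀ : 0 ≤ η₀) (hxa : dist x a ≤ s) (hya : dist y a ≤ s)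
    (hma : dist (H.W x y (1/2)) a ≤ (1 - η₀) * s) {l : ℝ} (hl : l ∈ Set.Icc (0:ℝ) 1) :
    dist (H.W x y l) a ≤ (1 - 2 * l * (1 - l) * η₀) * s := by
  have hηs : 0 ≤ η₀ * s := mul_nonneg hη₀ (dist_nonneg.trans hxa)
  rcases le_total l (1/2) with hhalf | hhalf
  · have h := hU.dist_W_le_of_le_half hxa hma ⟨hl.1, hhalf⟩
    nlinarith [mul_nonneg (mul_nonneg hl.1 hl.1) hηs]
  · have hma' : dist (H.W y x (1/2)) a ≤ (1 - η₀) * s := by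
      rwa [H.W3 y x (1/2) (by norm_num), show (1:ℝ) - 1/2 = 1/2 by norm_num]
    have h := hU.dist_W_le_of_le_half (l := 1 - l) hya hma' ⟨by linarith [hl.2], by linarith⟩
    rw [H.W3 x y l hl]
    nlinarith [mul_nonneg (mul_nonneg (sub_nonneg.mpr hl.2) (sub_nonneg.mpr hl.2)) hηs]

end UnifConvex

end WHyp

theorem stmt1 {X : Type*} [MetricSpace X] (H : WHyp X) (η : ℝ → ℝ → ℝ)
    (hU : H.UnifConvex η) (r ε : ℝ) (a x y : X)
    (hr : 0 < r) (hε : ε ∈ Set.Ioc (0:ℝ) 2)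
    (hxa : dist x a ≤ r) (hya : dist y a ≤ r) (hxy : ε * r ≤ dist x y) :
    ∀ l ∈ Set.Icc (0:ℝ) 1, ∀ s : ℝ, r ≤ s →
      dist (H.W x y l) a ≤ (1 - 2 * l * (1 - l) * η s (ε * r / s)) * s := by
  intro l hl s hs
  have hs0 : 0 < s := hr.trans_le hs
  have hεs : ε * r / s ∈ Set.Ioc (0:ℝ) 2 :=
    ⟨by have := hε.1; positivity, (div_le_iff₀ hs0).mpr (by nlinarith [hε.2])⟩
  have hma := hU.2 s _ a x y hs0 hεs (hxa.trans hs) (hya.trans hs)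
    (by rwa [div_mul_cancel₀ _ hs0.ne'])
  exact hU.dist_W_le_of_dist_midpoint_le (hU.1 s _ hs0 hεs).1.le (hxa.trans hs)
    (hya.trans hs) hma hl
end

section
/- Let (X,d,W) be a complete UCW-hyperbolic space, C ⊆ X a nonempty bounded closed convex subset and T : C → C nonexpansive. Then T has a fixed point. -/
/-!
Approximate fixed points exist in any bounded closed convex set of a complete `W`-hyperbolic
space: the map `x ↦ (1 - t) x₀ ⊕ t T x` is a `t`-contraction, and its fixed point moves by at most
`(1 - t) diam C` under `T`. Fix such a sequence `uₙ` with `d(uₙ, T uₙ) → 0` and let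
`r(y) = limsup d(uₙ, y)`. Uniform convexity with a monotone modulus forces the points of `C` where
`r` is almost minimal to be uniformly close to each other, so `r` has exactly one minimiser `z` on
`C` (a minimising sequence is Cauchy). Since `r(T z) ≤ r(z)` by nonexpansiveness, `T z = z`.
-/

open Set Filter Metric Bornology Function

/-- A modulus of uniform convexity is monotone if it decreases in `r` for fixed `ε`. -/
def MonotoneModulus (η : ℝ → ℝ → ℝ) : Prop :=
  ∀ r s ε : ℝ, 0 < r → r ≤ s → ε ∈ Set.Ioc (0:ℝ) 2 → η s ε ≤ η r ε

/-- A subset `C` is convex in the `W`-hyperbolic space `H`. -/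
def WHyp.ConvexSet {X : Type*} [MetricSpace X] (H : WHyp X) (C : Set X) : Prop :=
  ∀ x ∈ C, ∀ y ∈ C, ∀ l ∈ Set.Icc (0:ℝ) 1, H.W x y l ∈ C

open Topology

section AsymptoticRadius

variable {X : Type*} [MetricSpace X] {u : ℕ → X} {y z : X} {s : ℝ}

noncomputable def asymptoticRadiusAt (u : ℕ → X) (y : X) : ℝ :=
  limsup (fun n => dist (u n) y) atTop

noncomputable def asymptoticRadius (u : ℕ → X) (C : Set X) : ℝ :=
  sInf (asymptoticRadiusAt u '' C)

lemma isBoundedUnder_dist_of_isBounded_range (hu : IsBounded (range u)) (y : X) :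
    IsBoundedUnder (· ≤ ·) atTop (fun n => dist (u n) y) := by
  obtain ⟨R, hR⟩ := (isBounded_iff_subset_closedBall y).1 hu
  exact isBoundedUnder_of ⟨R, fun n => mem_closedBall.1 (hR (mem_range_self n))⟩

lemma asymptoticRadiusAt_le_of_eventually_le (h : ∀ᶠ n in atTop, dist (u n) y ≤ s) :
    asymptoticRadiusAt u y ≤ s :=
  limsup_le_of_le (isCoboundedUnder_le_of_le atTop fun _ => dist_nonneg) h

lemma eventually_dist_lt_of_asymptoticRadiusAt_lt (hu : IsBounded (range u))
    (h : asymptoticRadiusAt u y < s) : ∀ᶠ n in atTop, dist (u n) y < s :=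
  eventually_lt_of_limsup_lt h (isBoundedUnder_dist_of_isBounded_range hu y)

lemma asymptoticRadiusAt_nonneg (hu : IsBounded (range u)) : 0 ≤ asymptoticRadiusAt u y :=
  le_limsup_of_frequently_le (Frequently.of_forall fun _ => dist_nonneg)
    (isBoundedUnder_dist_of_isBounded_range hu y)

lemma lipschitzWith_asymptoticRadiusAt (hu : IsBounded (range u)) :
    LipschitzWith 1 (asymptoticRadiusAt u) := by
  refine LipschitzWith.of_le_add fun z y => le_of_forall_pos_le_add fun ε hε => ?_
  refine asymptoticRadiusAt_le_of_eventually_le ?_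
  filter_upwards [eventually_dist_lt_of_asymptoticRadiusAt_lt hu
    (lt_add_of_pos_right (asymptoticRadiusAt u y) hε)] with n hn
  linarith [dist_triangle (u n) y z, dist_comm y z]

lemma dist_le_asymptoticRadiusAt_add (hu : IsBounded (range u)) :
    dist y z ≤ asymptoticRadiusAt u y + asymptoticRadiusAt u z := by
  refine le_of_forall_pos_le_add fun ε hε => ?_
  obtain ⟨n, hny, hnz⟩ :=
    ((eventually_dist_lt_of_asymptoticRadiusAt_lt hu
        (lt_add_of_pos_right (asymptoticRadiusAt u y) (half_pos hε))).and
      (eventually_dist_lt_of_asymptoticRadiusAt_lt hu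
        (lt_add_of_pos_right (asymptoticRadiusAt u z) (half_pos hε)))).exists
  linarith [dist_triangle_left y z (u n)]

lemma asymptoticRadiusAt_map_le {C : Set X} {T : X → X}
    (hTne : ∀ x ∈ C, ∀ y ∈ C, dist (T x) (T y) ≤ dist x y) (hu : IsBounded (range u))
    (huC : ∀ n, u n ∈ C) (hu_afp : Tendsto (fun n => dist (u n) (T (u n))) atTop (𝓝 0))
    (hz : z ∈ C) : asymptoticRadiusAt u (T z) ≤ asymptoticRadiusAt u z := by
  refine le_of_forall_pos_le_add fun ε hε => asymptoticRadiusAt_le_of_eventually_le ?_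
  filter_upwards [eventually_dist_lt_of_asymptoticRadiusAt_lt hu
      (lt_add_of_pos_right (asymptoticRadiusAt u z) (half_pos hε)),
    hu_afp.eventually (gt_mem_nhds (half_pos hε))] with n hnz hnT
  linarith [dist_triangle (u n) (T (u n)) (T z), hTne _ (huC n) _ hz]

lemma bddBelow_asymptoticRadiusAt_image (hu : IsBounded (range u)) (C : Set X) :
    BddBelow (asymptoticRadiusAt u '' C) :=
  ⟨0, by rintro _ ⟨y, -, rfl⟩; exact asymptoticRadiusAt_nonneg hu⟩

lemma asymptoticRadius_le_asymptoticRadiusAt (hu : IsBounded (range u)) {C : Set X}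
    (hy : y ∈ C) : asymptoticRadius u C ≤ asymptoticRadiusAt u y :=
  csInf_le (bddBelow_asymptoticRadiusAt_image hu C) (mem_image_of_mem _ hy)

lemma asymptoticRadius_nonneg (hu : IsBounded (range u)) (C : Set X) :
    0 ≤ asymptoticRadius u C :=
  Real.sInf_nonneg (by rintro _ ⟨y, -, rfl⟩; exact asymptoticRadiusAt_nonneg hu)

end AsymptoticRadius

theorem exists_eq_sInf_image_of_forall_dist_lt {X : Type*} [MetricSpace X] [CompleteSpace X]
    {f : X → ℝ} (hf : Continuous f) {C : Set X} (hCne : C.Nonempty) (hCcl : IsClosed C)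
    (hbdd : BddBelow (f '' C))
    (h : ∀ e > 0, ∃ δ > 0, ∀ y ∈ C, ∀ z ∈ C,
      f y < sInf (f '' C) + δ → f z < sInf (f '' C) + δ → dist y z < e) :
    ∃ z ∈ C, f z = sInf (f '' C) := by
  obtain ⟨w, -, hw, hwC⟩ := exists_seq_tendsto_sInf (hCne.image f) hbdd
  choose v hvC hvw using hwC
  have hv : CauchySeq v := by
    refine Metric.cauchySeq_iff.2 fun e he => ?_
    obtain ⟨δ, hδ, hsep⟩ := h e he
    obtain ⟨N, hN⟩ := eventually_atTop.1 (hw.eventually (gt_mem_nhds (lt_add_of_pos_right _ hδ)))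
    exact ⟨N, fun m hm n hn =>
      hsep _ (hvC m) _ (hvC n) ((hvw m).symm ▸ hN m hm) ((hvw n).symm ▸ hN n hn)⟩
  obtain ⟨z, hz⟩ := cauchySeq_tendsto_of_complete hv
  refine ⟨z, hCcl.mem_of_tendsto hz (Eventually.of_forall hvC), tendsto_nhds_unique
    ((hf.tendsto z).comp hz) ?_⟩
  simpa only [Function.comp_def, hvw] using hw

namespace WHyp

variable {X : Type*} [MetricSpace X] (H : WHyp X)

lemma dist_W_W_le_of_left_eq (x y y' : X) {t : ℝ} (ht : t ∈ Icc (0 : ℝ) 1) :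
    dist (H.W x y t) (H.W x y' t) ≤ t * dist y y' := by
  simpa using H.W4 x x y y' t ht

lemma dist_W_right_le (x y : X) {t : ℝ} (ht : t ∈ Icc (0 : ℝ) 1) :
    dist (H.W x y t) y ≤ (1 - t) * dist x y := by
  simpa [dist_comm] using H.W1 x y y t ht

lemma exists_dist_map_le [CompleteSpace X] {C : Set X} (hCne : C.Nonempty)
    (hCbd : IsBounded C) (hCcl : IsClosed C) (hCconv : H.ConvexSet C) {T : X → X}
    (hT : MapsTo T C C) (hTne : ∀ x ∈ C, ∀ y ∈ C, dist (T x) (T y) ≤ dist x y)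
    {t : ℝ} (ht : t ∈ Ico (0 : ℝ) 1) :
    ∃ p ∈ C, dist p (T p) ≤ (1 - t) * diam C := by
  obtain ⟨x₀, hx₀⟩ := hCne
  have htI : t ∈ Icc (0 : ℝ) 1 := Ico_subset_Icc_self ht
  have : Nonempty C := ⟨⟨x₀, hx₀⟩⟩
  have : CompleteSpace C := hCcl.completeSpace_coe
  let f : C → C := fun p => ⟨H.W x₀ (T p) t, hCconv x₀ hx₀ _ (hT p.2) t htI⟩
  have hf : ContractingWith ⟨t, ht.1⟩ f := by
    refine ⟨ht.2, LipschitzWith.of_dist_le_mul fun p q => ?_⟩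
    calc dist (H.W x₀ (T p) t) (H.W x₀ (T q) t) ≤ t * dist (T p) (T q) :=
          H.dist_W_W_le_of_left_eq x₀ _ _ htI
      _ ≤ t * dist p q := mul_le_mul_of_nonneg_left (hTne _ p.2 _ q.2) ht.1
  set p := ContractingWith.fixedPoint f hf
  have hp : H.W x₀ (T p) t = p := congrArg Subtype.val (ContractingWith.fixedPoint_isFixedPt hf)
  refine ⟨p, p.2, ?_⟩
  calc dist (p : X) (T p) = dist (H.W x₀ (T p) t) (T p) := by rw [hp]
    _ ≤ (1 - t) * dist x₀ (T p) := H.dist_W_right_le _ _ htI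
    _ ≤ (1 - t) * diam C :=
        mul_le_mul_of_nonneg_left (dist_le_diam_of_mem hCbd hx₀ (hT p.2)) (by linarith [ht.2])

lemma exists_seq_tendsto_dist_map [CompleteSpace X] {C : Set X} (hCne : C.Nonempty)
    (hCbd : IsBounded C) (hCcl : IsClosed C) (hCconv : H.ConvexSet C) {T : X → X}
    (hT : MapsTo T C C) (hTne : ∀ x ∈ C, ∀ y ∈ C, dist (T x) (T y) ≤ dist x y) :
    ∃ u : ℕ → X, (∀ n, u n ∈ C) ∧ Tendsto (fun n => dist (u n) (T (u n))) atTop (𝓝 0) := by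
  have ht (n : ℕ) : 1 - 1 / ((n : ℝ) + 1) ∈ Ico (0 : ℝ) 1 :=
    ⟨sub_nonneg.2 (div_le_one_of_le₀ (le_add_of_nonneg_left n.cast_nonneg) (by positivity)),
      sub_lt_self _ Nat.one_div_pos_of_nat⟩
  choose u huC hu using fun n => H.exists_dist_map_le hCne hCbd hCcl hCconv hT hTne (ht n)
  refine ⟨u, huC, squeeze_zero (fun _ => dist_nonneg) hu ?_⟩
  simpa using tendsto_one_div_add_atTop_nhds_zero_nat.mul_const (diam C)

section UniformlyConvex

variable {H} {η : ℝ → ℝ → ℝ} (hU : H.UnifConvex η) {C : Set X} (hCconv : H.ConvexSet C)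
  {u : ℕ → X} (hu : IsBounded (range u))
include hU hCconv hu

/-- Witnessed by the midpoint of `y` and `z`. -/
lemma asymptoticRadius_le_of_unifConvex {y z : X} (hy : y ∈ C) (hz : z ∈ C) {s ε : ℝ}
    (hs : 0 < s) (hε : ε ∈ Ioc (0 : ℝ) 2) (hry : asymptoticRadiusAt u y < s)
    (hrz : asymptoticRadiusAt u z < s) (hyz : ε * s ≤ dist y z) :
    asymptoticRadius u C ≤ (1 - η s ε) * s := by
  have hm : H.W y z (1 / 2) ∈ C := hCconv y hy z hz _ ⟨by norm_num, by norm_num⟩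
  refine (asymptoticRadius_le_asymptoticRadiusAt hu hm).trans
    (asymptoticRadiusAt_le_of_eventually_le ?_)
  filter_upwards [eventually_dist_lt_of_asymptoticRadiusAt_lt hu hry,
    eventually_dist_lt_of_asymptoticRadiusAt_lt hu hrz] with n hny hnz
  rw [dist_comm]
  exact hU.2 s ε (u n) y z hs hε ((dist_comm y (u n)).trans_le hny.le)
    ((dist_comm z (u n)).trans_le hnz.le) hyz

lemma exists_pos_forall_dist_lt_of_unifConvex (hmon : MonotoneModulus η) {e : ℝ} (he : 0 < e) :
    ∃ δ > 0, ∀ y ∈ C, ∀ z ∈ C, asymptoticRadiusAt u y < asymptoticRadius u C + δ →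
      asymptoticRadiusAt u z < asymptoticRadius u C + δ → dist y z < e := by
  set R := asymptoticRadius u C
  rcases (asymptoticRadius_nonneg hu C : 0 ≤ R).eq_or_lt with hR | hR
  · refine ⟨e / 2, half_pos he, fun y _ z _ hry hrz => ?_⟩
    linarith [dist_le_asymptoticRadiusAt_add (y := y) (z := z) hu]
  -- `ε` is chosen so that `ε s ≤ e` for every radius `s ≤ R + 1`.
  set ε := min 2 (e / (R + 1))
  have hεI : ε ∈ Ioc (0 : ℝ) 2 := ⟨lt_min two_pos (by positivity), min_le_left _ _⟩
  have hc := hU.1 (R + 1) ε (by linarith) hεI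
  set c := η (R + 1) ε
  set δ := min 1 (c * R / 2)
  have hδ0 : 0 < δ := lt_min one_pos (by have := hc.1; positivity)
  refine ⟨δ, hδ0, fun y hy z hz hry hrz => ?_⟩
  by_contra! hyz
  have hs1 : R + δ ≤ R + 1 := add_le_add_right (min_le_left _ _) R
  have hs : 0 < R + δ := by linarith
  have hεs : ε * (R + δ) ≤ dist y z :=
    calc ε * (R + δ) ≤ e / (R + 1) * (R + 1) :=
          mul_le_mul (min_le_right _ _) hs1 hs.le (by positivity)
      _ = e := div_mul_cancel₀ e (by linarith)
      _ ≤ dist y z := hyz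
  have hle := asymptoticRadius_le_of_unifConvex hU hCconv hu hy hz hs hεI hry hrz hεs
  have hcs : c ≤ η (R + δ) ε := hmon (R + δ) (R + 1) ε hs hs1 hεI
  have hδc : δ ≤ c * R / 2 := min_le_right _ _
  nlinarith [mul_le_mul_of_nonneg_right hcs hs.le, mul_pos hc.1 hδ0, mul_pos hc.1 hR]

lemma eq_of_asymptoticRadiusAt_le (hmon : MonotoneModulus η) {y z : X} (hy : y ∈ C) (hz : z ∈ C)
    (hry : asymptoticRadiusAt u y ≤ asymptoticRadius u C)
    (hrz : asymptoticRadiusAt u z ≤ asymptoticRadius u C) : y = z := by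
  refine eq_of_forall_dist_le fun e he => ?_
  obtain ⟨δ, hδ, hsep⟩ := exists_pos_forall_dist_lt_of_unifConvex hU hCconv hu hmon he
  exact (hsep y hy z hz (by linarith) (by linarith)).le

end UniformlyConvex

end WHyp

theorem stmt10 {X : Type*} [MetricSpace X] [CompleteSpace X] (H : WHyp X)
    (η : ℝ → ℝ → ℝ) (hU : H.UnifConvex η) (hmon : MonotoneModulus η)
    (C : Set X) (hCne : C.Nonempty) (hCbd : Bornology.IsBounded C)
    (hCcl : IsClosed C) (hCconv : H.ConvexSet C)
    (T : X → X) (hT : Set.MapsTo T C C)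
    (hTne : ∀ x ∈ C, ∀ y ∈ C, dist (T x) (T y) ≤ dist x y) :
    ∃ p ∈ C, T p = p := by
  obtain ⟨u, huC, hu_afp⟩ := H.exists_seq_tendsto_dist_map hCne hCbd hCcl hCconv hT hTne
  have hu : IsBounded (range u) := hCbd.subset (range_subset_iff.2 huC)
  obtain ⟨z, hzC, hz⟩ := exists_eq_sInf_image_of_forall_dist_lt
    (lipschitzWith_asymptoticRadiusAt hu).continuous hCne hCcl
    (bddBelow_asymptoticRadiusAt_image hu C)
    fun e he => WHyp.exists_pos_forall_dist_lt_of_unifConvex hU hCconv hu hmon he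
  have hrz : asymptoticRadiusAt u z ≤ asymptoticRadius u C := hz.le
  exact ⟨z, hzC, WHyp.eq_of_asymptoticRadiusAt_le hU hCconv hu hmon (hT hzC) hzC
    ((asymptoticRadiusAt_map_le hTne hu huC hu_afp hzC).trans hrz) hrz⟩
end
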